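/- Let (ξ_i)_{i≥1} be i.i.d. positive random variables with E[e^{θξ₁}] < ∞ for all θ > 0. For n ∈ ℕ set τⁿ_k = (1/n)∑_{i=1}^k ξ_i, Nⁿ_t = sup{k : τⁿ_k ≤ t}, πⁿ(t) = τⁿ_{Nⁿ_t}. Let T > 0 and let f : [0,T] → ℝ^d be measurable and bounded. Then there exists a constant C depending only on T, the distribution of ξ₁, and sup_{t∈[0,T]}‖f(t)‖, such that for all n ∈ ℕ: E[ sup_{0 ≤ t ≤ T} (n/2) · (t − πⁿ(t))² · ‖f(πⁿ(t))‖ ] ≤ C · n^{−1/2}. -/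

import Mathlib

/-!
For `t ≤ T` the age `t - πⁿ(t)` is at most `ξ_N / n`, where `N` indexes the interarrival interval
straddling `nt`, and `S_N ≤ nT` for the partial sums `S_k = ξ_0 + ⋯ + ξ_{k-1}`. Hence the
supremum is at most `Cf / (2n) · sup {ξ_k² : S_k ≤ nT}`. Bounding this supremum by the root of the
sum of squares, and using that `{S_k ≤ nT}` is independent of `ξ_k`, its expectation is at most
`(E[ξ⁴] · ∑_k P(S_k ≤ nT))^{1/2}`. A Chernoff bound at exponent `-1/n`, combined with Bernoulli's
inequality `E[e^{-ξ/n}] ≤ 1 - (1 - E[e^{-ξ}]) / n`, shows that `∑_k P(S_k ≤ nT) = O(n)`, which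
gives the rate `n^{-1/2}`.
-/

open MeasureTheory ProbabilityTheory Finset
open scoped ENNReal

theorem Monotone.apply_sSup_setOf_le_le_and_not_le {α : Type*} [Preorder α] {s : ℕ → α}
    (hs : Monotone s) {u : α} (h0 : s 0 ≤ u) (hu : ∃ k, ¬ s k ≤ u) :
    s (sSup {k | s k ≤ u}) ≤ u ∧ ¬ s (sSup {k | s k ≤ u} + 1) ≤ u := by
  obtain ⟨k₀, hk₀⟩ := hu
  have hbdd : BddAbove {k | s k ≤ u} :=
    ⟨k₀, fun k hk => le_of_not_gt fun hlt => hk₀ ((hs hlt.le).trans hk)⟩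
  refine ⟨Nat.sSup_mem ⟨0, h0⟩ hbdd, fun h => ?_⟩
  exact (le_csSup hbdd h).not_gt (Nat.lt_succ_self _)

/-- The paper's `πⁿ(t)` for interarrival times `x`: the last of the points
`(x 0 + ⋯ + x (k - 1)) / n` that does not exceed `t`. -/
noncomputable def lastRenewal (x : ℕ → ℝ) (n : ℕ) (t : ℝ) : ℝ :=
  (∑ i ∈ range (sSup {k | (∑ i ∈ range k, x i) / n ≤ t}), x i) / n

theorem lastRenewal_mem_Icc_and_sub_le {x : ℕ → ℝ} (hx : ∀ i, 0 ≤ x i) {n : ℕ} (hn : 0 < n)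
    {t : ℝ} (ht : 0 ≤ t) (hex : ∃ k, n * t < ∑ i ∈ range k, x i) :
    ∃ N, ∑ i ∈ range N, x i ≤ n * t ∧ lastRenewal x n t ∈ Set.Icc 0 t ∧
      t - lastRenewal x n t ≤ x N / n := by
  have hn' : (0 : ℝ) < n := Nat.cast_pos.2 hn
  set s : ℕ → ℝ := fun k => (∑ i ∈ range k, x i) / n
  have hs : Monotone s := fun a b hab =>
    div_le_div_of_nonneg_right (sum_le_sum_of_subset_of_nonneg (range_mono hab)
      fun i _ _ => hx i) hn'.le
  obtain ⟨hle, hlt⟩ := hs.apply_sSup_setOf_le_le_and_not_le (u := t) (by simpa [s] using ht)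
    (hex.imp fun k hk => by simpa [s, lt_div_iff₀ hn', mul_comm] using hk)
  refine ⟨sSup {k | s k ≤ t}, ?_, ⟨?_, hle⟩, ?_⟩
  · simpa [s, div_le_iff₀ hn', mul_comm] using hle
  · exact div_nonneg (sum_nonneg fun i _ => hx i) hn'.le
  · simp only [s, sum_range_succ, add_div, not_le] at hlt
    change t - s _ ≤ _
    linarith

theorem iSup_renewal_age_le {E : Type*} [SeminormedAddCommGroup E] {x : ℕ → ℝ}
    (hx : ∀ i, 0 ≤ x i) {n : ℕ} (hn : 0 < n) {T : ℝ} (hT : 0 ≤ T)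
    (hex : ∃ k, n * T < ∑ i ∈ range k, x i) {f : ℝ → E} {Cf : ℝ}
    (hf : ∀ t ∈ Set.Icc 0 T, ‖f t‖ ≤ Cf) {M : ℝ}
    (hM : ∀ k, ∑ i ∈ range k, x i ≤ n * T → x k ^ 2 ≤ M) :
    ⨆ t : Set.Icc 0 T, (n / 2 : ℝ) * (t - lastRenewal x n t) ^ 2 * ‖f (lastRenewal x n t)‖
      ≤ Cf / (2 * n) * M := by
  have : Nonempty (Set.Icc 0 T) := ⟨⟨0, le_rfl, hT⟩⟩
  refine ciSup_le fun ⟨t, ht0, htT⟩ => ?_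
  obtain ⟨N, hN, ⟨hπ0, hπt⟩, hage⟩ := lastRenewal_mem_Icc_and_sub_le hx hn ht0
    (hex.imp fun k hk => lt_of_le_of_lt (by gcongr) hk)
  have hfπ := hf _ ⟨hπ0, hπt.trans htT⟩
  have hCf : 0 ≤ Cf := (norm_nonneg _).trans hfπ
  have hxN := hM N (hN.trans (by gcongr))
  calc (n / 2 : ℝ) * (t - lastRenewal x n t) ^ 2 * ‖f (lastRenewal x n t)‖
      ≤ (n / 2 : ℝ) * (x N / n) ^ 2 * Cf := by gcongr
    _ = Cf / (2 * n) * x N ^ 2 := by field_simp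
    _ ≤ Cf / (2 * n) * M := by gcongr

section Moments

variable {Ω : Type*} [MeasurableSpace Ω] {μ : Measure Ω}

theorem lintegral_le_rpow_lintegral_sq [IsProbabilityMeasure μ] {F : Ω → ℝ≥0∞}
    (hF : AEMeasurable F μ) : ∫⁻ ω, F ω ∂μ ≤ (∫⁻ ω, F ω ^ 2 ∂μ) ^ (1 / 2 : ℝ) := by
  simpa [ENNReal.rpow_two] using
    ENNReal.lintegral_mul_le_Lp_mul_Lq μ Real.HolderConjugate.two_two hF
      (aemeasurable_const (b := (1 : ℝ≥0∞)))

theorem lintegral_iSup_le_rpow_tsum_lintegral_sq [IsProbabilityMeasure μ] {ι : Type*}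
    [Countable ι] {X : ι → Ω → ℝ≥0∞} (hX : ∀ k, AEMeasurable (X k) μ) :
    ∫⁻ ω, ⨆ k, X k ω ∂μ ≤ (∑' k, ∫⁻ ω, X k ω ^ 2 ∂μ) ^ (1 / 2 : ℝ) := by
  have hpt : ∀ ω, ⨆ k, X k ω ≤ (∑' k, X k ω ^ 2) ^ (1 / 2 : ℝ) := fun ω =>
    iSup_le fun k => calc
      X k ω = (X k ω ^ 2) ^ (1 / 2 : ℝ) := by
        rw [← ENNReal.rpow_two, ← ENNReal.rpow_mul]; norm_num
      _ ≤ (∑' k, X k ω ^ 2) ^ (1 / 2 : ℝ) := by gcongr; exact ENNReal.le_tsum k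
  have hsq : ∀ k, AEMeasurable (fun ω => X k ω ^ 2) μ := fun k => (hX k).pow_const 2
  calc ∫⁻ ω, ⨆ k, X k ω ∂μ ≤ ∫⁻ ω, (∑' k, X k ω ^ 2) ^ (1 / 2 : ℝ) ∂μ := lintegral_mono hpt
    _ ≤ (∫⁻ ω, ((∑' k, X k ω ^ 2) ^ (1 / 2 : ℝ)) ^ 2 ∂μ) ^ (1 / 2 : ℝ) :=
      lintegral_le_rpow_lintegral_sq ((AEMeasurable.tsum hsq).pow_const _)
    _ = (∑' k, ∫⁻ ω, X k ω ^ 2 ∂μ) ^ (1 / 2 : ℝ) := by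
      rw [← lintegral_tsum hsq]
      congr 2 with ω
      rw [← ENNReal.rpow_two, ← ENNReal.rpow_mul]; norm_num

theorem integrable_exp_mul_of_nonpos_of_nonneg [IsFiniteMeasure μ] {X : Ω → ℝ} {t : ℝ}
    (hX : AEMeasurable X μ) (hX0 : ∀ᵐ ω ∂μ, 0 ≤ X ω) (ht : t ≤ 0) :
    Integrable (fun ω => Real.exp (t * X ω)) μ :=
  .of_mem_Icc 0 1 (Real.measurable_exp.comp_aemeasurable (hX.const_mul t)) <| hX0.mono fun _ h =>
    ⟨(Real.exp_pos _).le, Real.exp_le_one_iff.2 (mul_nonpos_of_nonpos_of_nonneg ht h)⟩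

theorem mgf_div_natCast_le [IsProbabilityMeasure μ] {X : Ω → ℝ} {t : ℝ}
    (ht : Integrable (fun ω => Real.exp (t * X ω)) μ) {n : ℕ} (hn : 0 < n) :
    mgf X μ (t / n) ≤ 1 - (1 - mgf X μ t) / n := by
  have hn' : (0 : ℝ) < n := Nat.cast_pos.2 hn
  -- Bernoulli's inequality for `y = exp (t x / n)`, whose `n`-th power is `exp (t x)`.
  have hpt : ∀ x : ℝ, Real.exp (t / n * x) ≤ 1 - 1 / n + Real.exp (t * x) / n := fun x => by
    have h := one_add_mul_le_pow (a := Real.exp (t / n * x) - 1)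
      (by linarith [Real.exp_pos (t / n * x)]) n
    rw [add_sub_cancel, ← Real.exp_nat_mul, ← mul_assoc, mul_div_cancel₀ _ hn'.ne'] at h
    rw [show 1 - 1 / (n : ℝ) + Real.exp (t * x) / n = 1 + (Real.exp (t * x) - 1) / n by ring,
      ← sub_le_iff_le_add', le_div_iff₀ hn']
    linarith
  calc mgf X μ (t / n) ≤ ∫ ω, (1 - 1 / n + Real.exp (t * X ω) / n) ∂μ :=
        integral_mono_of_nonneg (.of_forall fun ω => (Real.exp_pos _).le)
          ((integrable_const _).add (ht.div_const _)) (.of_forall fun ω => hpt (X ω))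
    _ = 1 - (1 - mgf X μ t) / n := by
        rw [integral_add (integrable_const _) (ht.div_const _), integral_div]
        simp only [one_div, integral_const, probReal_univ, smul_eq_mul, one_mul, mgf]
        ring

theorem mgf_lt_one_of_neg [IsProbabilityMeasure μ] {X : Ω → ℝ} {t : ℝ} (ht : t < 0)
    (hX : ∀ ω, 0 < X ω) (hint : Integrable (fun ω => Real.exp (t * X ω)) μ) :
    mgf X μ t < 1 := by
  have hlt : ∀ ω, Real.exp (t * X ω) < 1 := fun ω =>
    Real.exp_lt_one_iff.2 (mul_neg_of_neg_of_pos ht (hX ω))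
  have hpos : 0 < ∫ ω, (1 - Real.exp (t * X ω)) ∂μ := by
    rw [integral_pos_iff_support_of_nonneg (fun ω => (sub_pos.2 (hlt ω)).le)
      ((integrable_const 1).sub hint)]
    simp [Function.support, sub_eq_zero, (hlt _).ne']
  rw [integral_sub (integrable_const 1) hint] at hpos
  simpa [mgf] using hpos

theorem integral_le_of_ae_ofReal_le_of_lintegral_le {G : Ω → ℝ} {F : Ω → ℝ≥0∞}
    (hG : ∀ ω, 0 ≤ G ω) (hGF : ∀ᵐ ω ∂μ, ENNReal.ofReal (G ω) ≤ F ω) {a : ℝ} (ha : 0 ≤ a)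
    (hF : ∫⁻ ω, F ω ∂μ ≤ ENNReal.ofReal a) : ∫ ω, G ω ∂μ ≤ a := by
  have h := norm_integral_le_lintegral_norm (μ := μ) G
  simp_rw [Real.norm_of_nonneg (hG _)] at h
  calc ∫ ω, G ω ∂μ ≤ (∫⁻ ω, ENNReal.ofReal (G ω) ∂μ).toReal := (Real.le_norm_self _).trans h
    _ ≤ (ENNReal.ofReal a).toReal :=
      ENNReal.toReal_mono ENNReal.ofReal_ne_top ((lintegral_mono_ae hGF).trans hF)
    _ = a := ENNReal.toReal_ofReal ha

end Moments

section Renewal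

variable {Ω : Type*} [MeasurableSpace Ω] {μ : Measure Ω} {ξ : ℕ → Ω → ℝ}

theorem mgf_sum_range (hmeas : ∀ i, Measurable (ξ i)) (hindep : iIndepFun ξ μ)
    (hident : ∀ i, IdentDistrib (ξ i) (ξ 0) μ μ) (k : ℕ) (t : ℝ) :
    mgf (∑ i ∈ range k, ξ i) μ t = mgf (ξ 0) μ t ^ k := by
  rw [hindep.mgf_sum hmeas,
    prod_eq_pow_card fun i _ => mgf_congr_of_identDistrib _ _ (hident i) t, card_range]

theorem measure_sum_range_le_le_exp_mul_mgf_pow (hmeas : ∀ i, Measurable (ξ i))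
    (hnonneg : ∀ i ω, 0 ≤ ξ i ω) (hindep : iIndepFun ξ μ)
    (hident : ∀ i, IdentDistrib (ξ i) (ξ 0) μ μ) {θ : ℝ} (hθ : 0 ≤ θ) (b : ℝ) (k : ℕ) :
    μ {ω | ∑ i ∈ range k, ξ i ω ≤ b}
      ≤ ENNReal.ofReal (Real.exp (θ * b) * mgf (ξ 0) μ (-θ) ^ k) := by
  have := hindep.isProbabilityMeasure
  have hS : Measurable (∑ i ∈ range k, ξ i) := by fun_prop
  have h := measure_le_le_exp_mul_mgf (μ := μ) b (neg_nonpos.2 hθ)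
    (integrable_exp_mul_of_nonpos_of_nonneg hS.aemeasurable
      (.of_forall fun ω => by simpa using sum_nonneg fun i _ => hnonneg i ω) (neg_nonpos.2 hθ))
  rw [neg_neg, mgf_sum_range hmeas hindep hident] at h
  simpa [← ofReal_measureReal] using ENNReal.ofReal_le_ofReal h

theorem tsum_measure_sum_range_le_natCast_mul_le (hmeas : ∀ i, Measurable (ξ i))
    (hpos : ∀ i ω, 0 < ξ i ω) (hindep : iIndepFun ξ μ)
    (hident : ∀ i, IdentDistrib (ξ i) (ξ 0) μ μ) (b : ℝ) {n : ℕ} (hn : 0 < n) :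
    ∑' k, μ {ω | ∑ i ∈ range k, ξ i ω ≤ n * b}
      ≤ ENNReal.ofReal (Real.exp b / (1 - mgf (ξ 0) μ (-1)) * n) := by
  have := hindep.isProbabilityMeasure
  have hn' : (0 : ℝ) < n := Nat.cast_pos.2 hn
  have hnonneg : ∀ i ω, 0 ≤ ξ i ω := fun i ω => (hpos i ω).le
  have hint : Integrable (fun ω => Real.exp (-1 * ξ 0 ω)) μ :=
    integrable_exp_mul_of_nonpos_of_nonneg (hmeas 0).aemeasurable (.of_forall (hnonneg 0))
      (by norm_num)
  set ρ := mgf (ξ 0) μ (-1)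
  set ρn := mgf (ξ 0) μ (-1 / n)
  have hρ : 0 < 1 - ρ := sub_pos.2 (mgf_lt_one_of_neg (by norm_num) (hpos 0) hint)
  -- With `θ = 1 / n` the Chernoff bounds sum to `exp b / (1 - ρn)`, and `1 - ρn ≥ (1 - ρ) / n`.
  have hρn : (1 - ρ) / n ≤ 1 - ρn := by linarith [mgf_div_natCast_le hint hn]
  have hρn1 : ρn < 1 := by linarith [div_pos hρ hn']
  calc ∑' k, μ {ω | ∑ i ∈ range k, ξ i ω ≤ n * b}
      ≤ ∑' k, ENNReal.ofReal (Real.exp b * ρn ^ k) := ENNReal.tsum_le_tsum fun k => by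
        have h := measure_sum_range_le_le_exp_mul_mgf_pow hmeas hnonneg hindep hident
          (θ := 1 / n) (by positivity) (n * b) k
        rwa [← mul_assoc, one_div_mul_cancel hn'.ne', one_mul, ← neg_div] at h
    _ = ENNReal.ofReal (Real.exp b * (1 - ρn)⁻¹) := by
        rw [← ENNReal.ofReal_tsum_of_nonneg
          (fun k => mul_nonneg (Real.exp_pos b).le (pow_nonneg mgf_nonneg k))
          ((summable_geometric_of_lt_one mgf_nonneg hρn1).mul_left _),
          tsum_mul_left, tsum_geometric_of_lt_one mgf_nonneg hρn1]
    _ ≤ ENNReal.ofReal (Real.exp b / (1 - ρ) * n) := by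
        rw [div_mul_eq_mul_div, mul_div_assoc]
        gcongr
        refine inv_le_of_inv_le₀ (by positivity) ?_
        rwa [inv_div]

theorem lintegral_indicator_sum_range_le_eq_mul (hmeas : ∀ i, Measurable (ξ i))
    (hindep : iIndepFun ξ μ) {g : ℝ → ℝ≥0∞} (hg : Measurable g) (b : ℝ) (k : ℕ) :
    ∫⁻ ω, {ω | ∑ i ∈ range k, ξ i ω ≤ b}.indicator (fun ω => g (ξ k ω)) ω ∂μ
      = μ {ω | ∑ i ∈ range k, ξ i ω ≤ b} * ∫⁻ ω, g (ξ k ω) ∂μ := by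
  set S := ∑ i ∈ range k, ξ i
  set I := (Set.Iic b).indicator (1 : ℝ → ℝ≥0∞)
  have hS : Measurable S := by fun_prop
  have hI : Measurable I := measurable_one.indicator measurableSet_Iic
  have hSξ : S ⟂ᵢ[μ] ξ k := hindep.indepFun_finsetSum_of_notMem hmeas notMem_range_self
  have hset : {ω | ∑ i ∈ range k, ξ i ω ≤ b} = S ⁻¹' Set.Iic b := by ext; simp [S]
  calc ∫⁻ ω, {ω | ∑ i ∈ range k, ξ i ω ≤ b}.indicator (fun ω => g (ξ k ω)) ω ∂μ
      = ∫⁻ ω, ((I ∘ S) * (g ∘ ξ k)) ω ∂μ := by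
        rw [hset]
        congr 1 with ω
        by_cases h : S ω ≤ b <;> simp [I, h]
    _ = (∫⁻ ω, I (S ω) ∂μ) * ∫⁻ ω, g (ξ k ω) ∂μ :=
        lintegral_mul_eq_lintegral_mul_lintegral_of_indepFun (hI.comp hS) (hg.comp (hmeas k))
          (hSξ.comp hI hg)
    _ = μ {ω | ∑ i ∈ range k, ξ i ω ≤ b} * ∫⁻ ω, g (ξ k ω) ∂μ := by
        rw [hset, ← lintegral_indicator_one (measurableSet_Iic.preimage hS)]
        rfl

theorem lintegral_iSup_indicator_sum_range_le_le (hmeas : ∀ i, Measurable (ξ i))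
    (hindep : iIndepFun ξ μ) (hident : ∀ i, IdentDistrib (ξ i) (ξ 0) μ μ) (b : ℝ) :
    ∫⁻ ω, ⨆ k, {ω | ∑ i ∈ range k, ξ i ω ≤ b}.indicator
        (fun ω => ENNReal.ofReal (ξ k ω ^ 2)) ω ∂μ
      ≤ ((∫⁻ ω, ENNReal.ofReal (ξ 0 ω ^ 4) ∂μ) * ∑' k, μ {ω | ∑ i ∈ range k, ξ i ω ≤ b})
        ^ (1 / 2 : ℝ) := by
  have := hindep.isProbabilityMeasure
  have hg : Measurable fun x : ℝ => ENNReal.ofReal (x ^ 4) := by fun_prop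
  refine (lintegral_iSup_le_rpow_tsum_lintegral_sq fun k => ?_).trans_eq ?_
  · exact (((hmeas k).pow_const 2).ennreal_ofReal.indicator
      (measurableSet_le (by fun_prop) measurable_const)).aemeasurable
  rw [← ENNReal.tsum_mul_left]
  congr 2 with k
  have hsq : ∀ ω,
      {ω | ∑ i ∈ range k, ξ i ω ≤ b}.indicator (fun ω => ENNReal.ofReal (ξ k ω ^ 2)) ω ^ 2
        = {ω | ∑ i ∈ range k, ξ i ω ≤ b}.indicator (fun ω => ENNReal.ofReal (ξ k ω ^ 4)) ω := by
    intro ω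
    by_cases h : ∑ i ∈ range k, ξ i ω ≤ b
    · simp [h, ← ENNReal.ofReal_pow (sq_nonneg _), ← pow_mul]
    · simp [h]
  simp_rw [hsq]
  rw [lintegral_indicator_sum_range_le_eq_mul hmeas hindep hg, mul_comm]
  exact congrArg (· * _) ((hident k).comp hg).lintegral_eq

theorem ae_exists_lt_sum_range (hmeas : ∀ i, Measurable (ξ i)) (hpos : ∀ i ω, 0 < ξ i ω)
    (hindep : iIndepFun ξ μ) (hident : ∀ i, IdentDistrib (ξ i) (ξ 0) μ μ) (c : ℝ) :
    ∀ᵐ ω ∂μ, ∃ k, c < ∑ i ∈ range k, ξ i ω := by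
  have h := tsum_measure_sum_range_le_natCast_mul_le hmeas hpos hindep hident c one_pos
  simp only [Nat.cast_one, one_mul] at h
  filter_upwards [ae_eventually_notMem (ne_top_of_le_ne_top ENNReal.ofReal_ne_top h)] with ω hω
  exact hω.exists.imp fun k hk => not_le.1 hk

theorem exists_lintegral_iSup_indicator_sum_range_le (hmeas : ∀ i, Measurable (ξ i))
    (hpos : ∀ i ω, 0 < ξ i ω) (hindep : iIndepFun ξ μ)
    (hident : ∀ i, IdentDistrib (ξ i) (ξ 0) μ μ) (h4 : Integrable (fun ω => ξ 0 ω ^ 4) μ)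
    (b : ℝ) :
    ∃ K, 0 ≤ K ∧ ∀ n : ℕ, 0 < n →
      ∫⁻ ω, ⨆ k, {ω | ∑ i ∈ range k, ξ i ω ≤ n * b}.indicator
          (fun ω => ENNReal.ofReal (ξ k ω ^ 2)) ω ∂μ ≤ ENNReal.ofReal (K * √n) := by
  have := hindep.isProbabilityMeasure
  have hρ : mgf (ξ 0) μ (-1) < 1 := mgf_lt_one_of_neg (by norm_num) (hpos 0)
    (integrable_exp_mul_of_nonpos_of_nonneg (hmeas 0).aemeasurable
      (.of_forall fun ω => (hpos 0 ω).le) (by norm_num))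
  set m4 := ∫ ω, ξ 0 ω ^ 4 ∂μ
  set L := Real.exp b / (1 - mgf (ξ 0) μ (-1))
  have hm4 : 0 ≤ m4 := integral_nonneg fun ω => by positivity
  have hL : 0 ≤ L := div_nonneg (Real.exp_pos b).le (sub_nonneg.2 hρ.le)
  refine ⟨√(m4 * L), Real.sqrt_nonneg _, fun n hn => ?_⟩
  calc _ ≤ (ENNReal.ofReal m4 * ENNReal.ofReal (L * n)) ^ (1 / 2 : ℝ) := by
        rw [ofReal_integral_eq_lintegral_ofReal h4 (.of_forall fun ω => by positivity)]
        grw [lintegral_iSup_indicator_sum_range_le_le hmeas hindep hident,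
          tsum_measure_sum_range_le_natCast_mul_le hmeas hpos hindep hident b hn]
    _ = ENNReal.ofReal (√(m4 * L) * √n) := by
        rw [← ENNReal.ofReal_mul hm4, ← Real.sqrt_mul (by positivity), Real.sqrt_eq_rpow,
          ENNReal.ofReal_rpow_of_nonneg (by positivity) (by norm_num), mul_assoc]

theorem exists_integral_iSup_renewal_age_le {E : Type*} [SeminormedAddCommGroup E]
    (hmeas : ∀ i, Measurable (ξ i)) (hpos : ∀ i ω, 0 < ξ i ω) (hindep : iIndepFun ξ μ)
    (hident : ∀ i, IdentDistrib (ξ i) (ξ 0) μ μ) (h4 : Integrable (fun ω => ξ 0 ω ^ 4) μ)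
    {T : ℝ} (hT : 0 ≤ T) {f : ℝ → E} {Cf : ℝ} (hf : ∀ t ∈ Set.Icc 0 T, ‖f t‖ ≤ Cf) :
    ∃ C : ℝ, 0 < C ∧ ∀ n : ℕ, 0 < n →
      (∫ ω, (⨆ t : Set.Icc (0 : ℝ) T, ((n : ℝ) / 2) * ((t : ℝ) - lastRenewal (ξ · ω) n t) ^ 2
          * ‖f (lastRenewal (ξ · ω) n t)‖) ∂μ) ≤ C * (n : ℝ) ^ (-(1 : ℝ) / 2) := by
  have hCf : 0 ≤ Cf := (norm_nonneg _).trans (hf 0 ⟨le_rfl, hT⟩)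
  obtain ⟨K, hK, hMK⟩ := exists_lintegral_iSup_indicator_sum_range_le hmeas hpos hindep hident h4 T
  refine ⟨Cf / 2 * K + 1, by positivity, fun n hn => ?_⟩
  set M : Ω → ℝ≥0∞ := fun ω => ⨆ k, {ω | ∑ i ∈ range k, ξ i ω ≤ n * T}.indicator
    (fun ω => ENNReal.ofReal (ξ k ω ^ 2)) ω
  have hM_meas : Measurable M := Measurable.iSup fun k => ((hmeas k).pow_const 2).ennreal_ofReal
    |>.indicator (measurableSet_le (by fun_prop) measurable_const)
  have hae : ∀ᵐ ω ∂μ, (∃ k, n * T < ∑ i ∈ range k, ξ i ω) ∧ M ω ≠ ∞ :=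
    (ae_exists_lt_sum_range hmeas hpos hindep hident _).and <|
      (ae_lt_top hM_meas (ne_top_of_le_ne_top ENNReal.ofReal_ne_top (hMK n hn))).mono
        fun _ h => h.ne
  refine (integral_le_of_ae_ofReal_le_of_lintegral_le
    (F := fun ω => ENNReal.ofReal (Cf / (2 * n)) * M ω) (a := Cf / (2 * n) * (K * √n))
    (fun ω => Real.iSup_nonneg fun t => by positivity) ?_ (by positivity)
    ((lintegral_const_mul _ hM_meas).trans_le ?_)).trans ?_
  · filter_upwards [hae] with ω ⟨hex, hMω⟩
    rw [← ENNReal.ofReal_toReal hMω, ← ENNReal.ofReal_mul (by positivity)]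
    refine ENNReal.ofReal_le_ofReal <|
      iSup_renewal_age_le (fun i => (hpos i ω).le) hn hT hex hf fun k hk => ?_
    refine (ENNReal.ofReal_le_iff_le_toReal hMω).1 (le_iSup_of_le k ?_)
    simp [hk]
  · rw [ENNReal.ofReal_mul (by positivity)]
    exact mul_le_mul_right (hMK n hn) _
  · have : (0 : ℝ) < √(n : ℝ) := Real.sqrt_pos.2 (Nat.cast_pos.2 hn)
    rw [neg_div, Real.rpow_neg (Nat.cast_nonneg n), ← Real.sqrt_eq_rpow]
    calc Cf / (2 * n) * (K * √n) = Cf / 2 * K * (√n)⁻¹ := by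
          field_simp
          rw [Real.sq_sqrt (Nat.cast_nonneg _)]
          ring
      _ ≤ (Cf / 2 * K + 1) * (√n)⁻¹ := by gcongr; linarith

end Renewal

theorem stmt_15_general {Ω : Type*} [MeasurableSpace Ω] (μ : Measure Ω) [IsProbabilityMeasure μ]
    (d : ℕ)
    (ξ : ℕ → Ω → ℝ) (hmeas : ∀ i, Measurable (ξ i))
    (hpos : ∀ i ω, 0 < ξ i ω)
    (hindep : iIndepFun ξ μ)
    (hident : ∀ i, IdentDistrib (ξ i) (ξ 0) μ μ)
    (hmgf : ∀ θ : ℝ, 0 < θ → Integrable (fun ω => Real.exp (θ * ξ 0 ω)) μ)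
    (τ : ℕ → ℕ → Ω → ℝ) (hτ : ∀ n k ω, τ n k ω = (∑ i ∈ Finset.range k, ξ i ω) / n)
    (N : ℕ → ℝ → Ω → ℕ) (hN : ∀ n t ω, N n t ω = sSup {k : ℕ | τ n k ω ≤ t})
    (π : ℕ → ℝ → Ω → ℝ) (hπ : ∀ n t ω, π n t ω = τ n (N n t ω) ω)
    (T : ℝ) (hT : 0 < T)
    (f : ℝ → EuclideanSpace ℝ (Fin d))
    (Cf : ℝ) (hf_bdd : ∀ t ∈ Set.Icc (0 : ℝ) T, ‖f t‖ ≤ Cf) :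
    ∃ C : ℝ, 0 < C ∧ ∀ n : ℕ, 0 < n →
      (∫ ω, (⨆ t : Set.Icc (0 : ℝ) T,
          ((n : ℝ) / 2) * ((t : ℝ) - π n t ω) ^ 2 * ‖f (π n t ω)‖) ∂μ)
        ≤ C * (n : ℝ) ^ (-(1 : ℝ) / 2) := by
  have h4 : Integrable (fun ω => ξ 0 ω ^ 4) μ :=
    integrable_pow_of_integrable_exp_mul one_ne_zero (by simpa using hmgf 1 one_pos)
      (integrable_exp_mul_of_nonpos_of_nonneg (hmeas 0).aemeasurable
        (.of_forall fun ω => (hpos 0 ω).le) (by norm_num)) 4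
  have hπ_eq : ∀ n t ω, π n t ω = lastRenewal (ξ · ω) n t := fun n t ω => by
    simp only [hπ, hN, hτ, lastRenewal]
  simp_rw [hπ_eq]
  exact exists_integral_iSup_renewal_age_le hmeas hpos hindep hident h4 hT.le hf_bdd

/-- Decay of the squared renewal age against a bounded function:
there is `C` (depending only on `T`, the distribution of `ξ₁` and `sup_{[0,T]}‖f‖`)
with `E[sup_{0≤t≤T} (n/2)(t − πⁿ(t))² ‖f(πⁿ(t))‖] ≤ C n^{−1/2}` for all `n`. -/
theorem stmt_15 {Ω : Type*} [MeasurableSpace Ω] (μ : Measure Ω) [IsProbabilityMeasure μ]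
    (d : ℕ) (hd : 0 < d)
    (ξ : ℕ → Ω → ℝ) (hmeas : ∀ i, Measurable (ξ i))
    (hpos : ∀ i ω, 0 < ξ i ω)
    (hindep : iIndepFun ξ μ)
    (hident : ∀ i, IdentDistrib (ξ i) (ξ 0) μ μ)
    (hmgf : ∀ θ : ℝ, 0 < θ → Integrable (fun ω => Real.exp (θ * ξ 0 ω)) μ)
    (τ : ℕ → ℕ → Ω → ℝ) (hτ : ∀ n k ω, τ n k ω = (∑ i ∈ Finset.range k, ξ i ω) / n)
    (N : ℕ → ℝ → Ω → ℕ) (hN : ∀ n t ω, N n t ω = sSup {k : ℕ | τ n k ω ≤ t})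
    (π : ℕ → ℝ → Ω → ℝ) (hπ : ∀ n t ω, π n t ω = τ n (N n t ω) ω)
    (T : ℝ) (hT : 0 < T)
    (f : ℝ → EuclideanSpace ℝ (Fin d)) (hf_meas : Measurable f)
    (Cf : ℝ) (hf_bdd : ∀ t ∈ Set.Icc (0 : ℝ) T, ‖f t‖ ≤ Cf) :
    ∃ C : ℝ, 0 < C ∧ ∀ n : ℕ, 0 < n →
      (∫ ω, (⨆ t : Set.Icc (0 : ℝ) T,
          ((n : ℝ) / 2) * ((t : ℝ) - π n t ω) ^ 2 * ‖f (π n t ω)‖) ∂μ)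
        ≤ C * (n : ℝ) ^ (-(1 : ℝ) / 2) :=
  stmt_15_general μ d ξ hmeas hpos hindep hident hmgf τ hτ N hN π hπ T hT f Cf hf_bdd
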